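/- arXiv:2401.16318 — 2 statements merged into one kernel-verified Lean document; each statement's English description precedes it below -/
import Mathlib

section
/- Let N be a finite set and v : Set N → ℝ. Define the OR interaction I_or(S) = -∑_{T ⊆ S} (-1)^{|S|-|T|} v(N \ T) for nonempty S, and I_or(∅) = v(∅). Then for every T ⊆ N, v(T) = I_or(∅) + ∑_{S ⊆ N, S ∩ T ≠ ∅} I_or(S). -/
open Finset MeasureTheory

variable {N : Type*} [Fintype N] [DecidableEq N]

noncomputable def Iand (v : Finset N → ℝ) (S : Finset N) : ℝ :=
  ∑ T ∈ S.powerset, (-1 : ℝ) ^ (S.card - T.card) * v T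

noncomputable def Ior (v : Finset N → ℝ) (S : Finset N) : ℝ :=
  if S = ∅ then v ∅
  else -∑ T ∈ S.powerset, (-1 : ℝ) ^ (S.card - T.card) * v (Finset.univ \ T)

/-! `Iand w` is the Möbius transform of `w` on the Boolean lattice, and summing it back over
`A.powerset` recovers `w A`. With `w U = v (univ \ U)`, the OR interactions are `-Iand w` off `∅`
while `Ior v ∅ = v ∅ = w univ`; so the right-hand side is the sum of `Iand w` over the subsets
disjoint from `T`, i.e. over the powerset of `univ \ T`, which is `w (univ \ T) = v T`. -/

theorem sum_Icc_neg_one_pow_card_sdiff {α R : Type*} [DecidableEq α] [Ring R]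
    {U A : Finset α} (hUA : U ⊆ A) :
    ∑ S ∈ Icc U A, (-1 : R) ^ #(S \ U) = if U = A then 1 else 0 := by
  have hinj : Set.InjOn (U ∪ ·) ((A \ U).powerset : Set (Finset α)) := by
    intro V hV V' hV' hVV'
    simp only [coe_powerset, Set.mem_preimage, Set.mem_powerset_iff, coe_subset,
      subset_sdiff] at hV hV'
    rw [← union_sdiff_cancel_left hV.2.symm, ← union_sdiff_cancel_left hV'.2.symm]
    exact congrArg (· \ U) hVV'
  have hsign : ∑ V ∈ (A \ U).powerset, (-1 : R) ^ #V = if A \ U = ∅ then 1 else 0 := by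
    exact_mod_cast congrArg (Int.cast (R := R)) (sum_powerset_neg_one_pow_card (x := A \ U))
  have hempty : A \ U = ∅ ↔ U = A :=
    sdiff_eq_empty_iff_subset.trans ⟨hUA.antisymm, fun h => h ▸ subset_rfl⟩
  rw [Icc_eq_image_powerset hUA, sum_image hinj, ← if_congr hempty rfl rfl, ← hsign]
  refine sum_congr rfl fun V hV => ?_
  rw [union_sdiff_cancel_left (subset_sdiff.mp (mem_powerset.mp hV)).2.symm]

theorem sum_powerset_Iand {α : Type*} [DecidableEq α] (w : Finset α → ℝ) (A : Finset α) :
    ∑ S ∈ A.powerset, Iand w S = w A := by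
  calc ∑ S ∈ A.powerset, Iand w S
      = ∑ S ∈ A.powerset, ∑ U ∈ S.powerset, (-1 : ℝ) ^ (#S - #U) * w U := rfl
    _ = ∑ U ∈ A.powerset, ∑ S ∈ Icc U A, (-1 : ℝ) ^ (#S - #U) * w U :=
        sum_comm' fun S U => by
          simp only [mem_powerset, mem_Icc]
          exact ⟨fun ⟨hSA, hUS⟩ => ⟨⟨hUS, hSA⟩, hUS.trans hSA⟩, fun ⟨h, _⟩ => ⟨h.2, h.1⟩⟩
    _ = ∑ U ∈ A.powerset, (if U = A then 1 else 0) * w U := by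
        refine sum_congr rfl fun U hU => ?_
        rw [← sum_Icc_neg_one_pow_card_sdiff (mem_powerset.mp hU), sum_mul]
        refine sum_congr rfl fun S hS => ?_
        rw [card_sdiff_of_subset (mem_Icc.mp hS).1]
    _ = w A := by simp

theorem Ior_eq_neg_Iand (v : Finset N → ℝ) {S : Finset N} (hS : S ≠ ∅) :
    Ior v S = -Iand (fun U => v (univ \ U)) S := by
  rw [Ior, if_neg hS, Iand]

theorem or_universal_matching (v : Finset N → ℝ) (T : Finset N) :
    v T = Ior v ∅ +
      ∑ S ∈ Finset.univ.powerset.filter (fun S => (S ∩ T).Nonempty), Ior v S := by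
  set w : Finset N → ℝ := fun U => v (univ \ U)
  set meets := univ.powerset.filter (fun S => (S ∩ T).Nonempty)
  have hmeets : ∑ S ∈ meets, Ior v S = -∑ S ∈ meets, Iand w S := by
    rw [← sum_neg_distrib]
    refine sum_congr rfl fun S hS => Ior_eq_neg_Iand v ?_
    rintro rfl
    simp [meets] at hS
  have hmisses : univ.powerset.filter (fun S => ¬(S ∩ T).Nonempty) = (univ \ T).powerset := by
    ext S
    simp [subset_sdiff, not_nonempty_iff_eq_empty, disjoint_iff_inter_eq_empty]
  calc v T = w (univ \ T) := by simp [w]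
    _ = ∑ S ∈ univ.powerset, Iand w S - ∑ S ∈ meets, Iand w S := by
        rw [← sum_powerset_Iand w (univ \ T), ← hmisses,
          ← sum_filter_add_sum_filter_not univ.powerset (fun S => (S ∩ T).Nonempty)]
        ring
    _ = Ior v ∅ + ∑ S ∈ meets, Ior v S := by
        rw [sum_powerset_Iand, hmeets, Ior, if_pos rfl]
        simp [w, sub_eq_add_neg]
end

section
/- Let N be a finite set and v : Set N → ℝ. For i ∈ N, the sum of all AND interactions of subsets containing i, each divided by its cardinality, sums over i to v(N) − v(∅): ∑_{i ∈ N} ∑_{S ∋ i} I_and(S)/|S| = v(N) − v(∅). -/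
open Finset MeasureTheory

variable {N : Type*} [Fintype N] [DecidableEq N]

/-! Each nonempty coalition `S` is counted by its `|S|` members, each receiving `I_and(S)/|S|`,
so the double sum is `∑_{S ≠ ∅} I_and(S)`. Möbius inversion on the Boolean lattice gives
`∑_{S ⊆ U} I_and(S) = v(U)`, because `∑_{T ⊆ S ⊆ U} (-1)^{|S|-|T|}` vanishes unless `T = U`. -/

theorem Finset.sum_Icc_neg_one_pow_card_sub {α R : Type*} [DecidableEq α] [Ring R]
    {s t : Finset α} (hst : s ⊆ t) :
    ∑ u ∈ Icc s t, (-1 : R) ^ (#u - #s) = if s = t then 1 else 0 := by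
  have hinj : Set.InjOn (s ∪ ·) (t \ s).powerset := fun a ha b hb hab => by
    simp only [coe_powerset, Set.mem_preimage, Set.mem_powerset_iff, coe_subset] at ha hb
    rw [← union_sdiff_cancel_left (disjoint_of_subset_right ha disjoint_sdiff),
      ← union_sdiff_cancel_left (disjoint_of_subset_right hb disjoint_sdiff)]
    exact congrArg (· \ s) hab
  rw [Icc_eq_image_powerset hst, sum_image hinj]
  calc ∑ w ∈ (t \ s).powerset, (-1 : R) ^ (#(s ∪ w) - #s)
      = ((∑ w ∈ (t \ s).powerset, (-1 : ℤ) ^ #w : ℤ) : R) := by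
        push_cast
        refine sum_congr rfl fun w hw => ?_
        rw [card_union_of_disjoint (disjoint_of_subset_right (mem_powerset.1 hw) disjoint_sdiff),
          Nat.add_sub_cancel_left]
    _ = if s = t then 1 else 0 := by
        have hempty : t \ s = ∅ ↔ s = t := by
          rw [sdiff_eq_empty_iff_subset]; exact ⟨subset_antisymm hst, fun h => h ▸ subset_rfl⟩
        rw [sum_powerset_neg_one_pow_card]
        simp only [hempty]
        split_ifs <;> simp

omit [Fintype N] in
theorem sum_powerset_Iand_s17 (v : Finset N → ℝ) (U : Finset N) :
    ∑ S ∈ U.powerset, Iand v S = v U := by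
  unfold Iand
  rw [sum_comm' (t' := U.powerset) (s' := fun T => Icc T U) fun S T => by
    simp only [mem_powerset, mem_Icc]
    constructor
    · exact fun ⟨hSU, hTS⟩ => ⟨⟨hTS, hSU⟩, hTS.trans hSU⟩
    · exact fun ⟨⟨hTS, hSU⟩, _⟩ => ⟨hSU, hTS⟩]
  calc ∑ T ∈ U.powerset, ∑ S ∈ Icc T U, (-1 : ℝ) ^ (#S - #T) * v T
      = ∑ T ∈ U.powerset, if T = U then v T else 0 := by
        refine sum_congr rfl fun T hT => ?_
        rw [← sum_mul, sum_Icc_neg_one_pow_card_sub (mem_powerset.1 hT)]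
        split_ifs <;> simp
    _ = v U := by simp

theorem Finset.sum_const_div_card {α K : Type*} [Field K] [CharZero K]
    {s : Finset α} (hs : s.Nonempty) (x : K) : ∑ _i ∈ s, x / #s = x := by
  rw [sum_const, nsmul_eq_mul]
  exact mul_div_cancel₀ x (Nat.cast_ne_zero.2 hs.card_pos.ne')

theorem shapley_efficiency_via_dividends (v : Finset N → ℝ) :
    ∑ i ∈ (Finset.univ : Finset N),
      ∑ S ∈ Finset.univ.powerset.filter (fun S => i ∈ S), Iand v S / S.card
    = v Finset.univ - v ∅ := by
  calc _ = ∑ S ∈ univ.powerset, ∑ _i ∈ S, Iand v S / #S :=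
        sum_comm' fun i S => by simp
    _ = ∑ S ∈ univ.powerset.erase ∅, ∑ _i ∈ S, Iand v S / #S := (sum_erase _ (by simp)).symm
    _ = ∑ S ∈ univ.powerset.erase ∅, Iand v S :=
        sum_congr rfl fun S hS =>
          sum_const_div_card (nonempty_iff_ne_empty.2 (ne_of_mem_erase hS)) _
    _ = ∑ S ∈ univ.powerset, Iand v S - Iand v ∅ := by
        rw [← add_sum_erase _ _ (empty_mem_powerset _)]; ring
    _ = v univ - v ∅ := by rw [sum_powerset_Iand_s17]; simp [Iand]
end
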